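/- arXiv:2504.20639 — 2 statements merged into one kernel-verified Lean document; each statement's English description precedes it below -/
import Mathlib

section
/- Converse bound on the first-round rate: in any scheme satisfying the decodability constraint (the server recovers Σ_i a_{n,i} W_i for all n from first-round messages, queries, and second-round messages of all users except u), the first-round message X_u of user u satisfies H(X_u) ≥ H(W_u) = L, where the W_i are mutually independent uniform vectors in F_q^L independent of all keys and queries, and X_u is a deterministic function of (W_u, P_u, Q_{1,u}). -/
open scoped ENNReal

/-- Shannon entropy, base `q`, of the random variable `X` on the probability space `μ`
(with the convention `0 · log 0 = 0`). -/
noncomputable def ent {Ω α : Type*} [Fintype α] (q : ℝ) (μ : PMF Ω) (X : Ω → α) : ℝ :=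
  - ∑ x : α, ((μ.map X) x).toReal * Real.logb q ((μ.map X) x).toReal

section EntropyToolbox

open Finset
open scoped Classical

noncomputable def pmfH {α : Type*} [Fintype α] (q : ℝ) (p : PMF α) : ℝ :=
  - ∑ x : α, (p x).toReal * Real.logb q ((p x).toReal)

lemma ent_eq_pmfH {Ω α : Type*} [Fintype α] (q : ℝ) (μ : PMF Ω) (X : Ω → α) :
    ent q μ X = pmfH q (μ.map X) := rfl

variable {α β γ : Type*}

lemma toReal_pos_of_ne_zero [Fintype α] (p : PMF α) {x : α} (hx : p x ≠ 0) :
    0 < (p x).toReal := ENNReal.toReal_pos hx (p.apply_ne_top x)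

lemma pmf_real_sum [Fintype α] (p : PMF α) : ∑ x, (p x).toReal = 1 := by
  have h := p.tsum_coe
  rw [tsum_fintype] at h
  have h2 := congrArg ENNReal.toReal h
  rwa [ENNReal.toReal_sum (fun a _ => p.apply_ne_top a), ENNReal.toReal_one] at h2

lemma map_toReal [Fintype α] (p : PMF α) (f : α → β) (b : β) :
    ((p.map f) b).toReal = ∑ a, if b = f a then (p a).toReal else 0 := by
  rw [PMF.map_apply, tsum_fintype,
    ENNReal.toReal_sum (fun a _ => by split_ifs; exacts [p.apply_ne_top a, ENNReal.zero_ne_top])]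
  exact Finset.sum_congr rfl fun a _ => by split_ifs <;> simp

lemma le_map_toReal [Fintype α] (p : PMF α) (f : α → β) (a : α) :
    (p a).toReal ≤ ((p.map f) (f a)).toReal := by
  rw [map_toReal]
  have h : (p a).toReal = (if f a = f a then (p a).toReal else 0) := by simp
  rw [h]
  exact Finset.single_le_sum (f := fun i => if f a = f i then (p i).toReal else 0)
    (fun i _ => by split_ifs <;> simp [ENNReal.toReal_nonneg]) (mem_univ a)

lemma sum_tlogr [Fintype α] [Fintype β] (q : ℝ) (p : PMF α) (f : α → β) :
    ∑ b, ((p.map f) b).toReal * Real.logb q ((p.map f) b).toReal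
      = ∑ a, (p a).toReal * Real.logb q ((p.map f) (f a)).toReal := by
  have : ∀ b, ((p.map f) b).toReal * Real.logb q ((p.map f) b).toReal
      = ∑ a, if b = f a then (p a).toReal * Real.logb q ((p.map f) b).toReal else 0 := by
    intro b
    rw [map_toReal, Finset.sum_mul]
    exact Finset.sum_congr rfl fun a _ => by split_ifs <;> simp
  simp_rw [this]
  rw [Finset.sum_comm]
  refine Finset.sum_congr rfl fun a _ => ?_
  have : ∀ b, (if b = f a then (p a).toReal * Real.logb q ((p.map f) b).toReal else 0)
      = (if b = f a then (p a).toReal * Real.logb q ((p.map f) (f a)).toReal else 0) := by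
    intro b; split_ifs with h
    · rw [h]
    · rfl
  simp_rw [this]
  rw [Finset.sum_ite_eq' univ (f a)]
  simp

lemma pmfH_map_le [Fintype α] [Fintype β] {q : ℝ} (hq : 1 < q)
    (p : PMF α) (f : α → β) : pmfH q (p.map f) ≤ pmfH q p := by
  unfold pmfH
  rw [neg_le_neg_iff, sum_tlogr]
  refine Finset.sum_le_sum fun a _ => ?_
  rcases eq_or_lt_of_le (ENNReal.toReal_nonneg (a := p a)) with h0 | h0
  · rw [← h0]; simp
  · refine mul_le_mul_of_nonneg_left ?_ h0.le
    exact (Real.logb_le_logb hq h0 (lt_of_lt_of_le h0 (le_map_toReal p f a))).mpr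
      (le_map_toReal p f a)

lemma ent_comp_le {Ω : Type*} [Fintype α] [Fintype β] {q : ℝ} (hq : 1 < q)
    (μ : PMF Ω) (Z : Ω → α) (f : α → β) :
    ent q μ (fun ω => f (Z ω)) ≤ ent q μ Z := by
  have h := pmfH_map_le hq (μ.map Z) f
  rw [PMF.map_comp] at h
  exact h

lemma injOn_of_pmfH_eq [Fintype γ] [Fintype β] {q : ℝ} (hq : 1 < q)
    (p : PMF γ) (f : γ → β) (h : pmfH q p = pmfH q (p.map f)) :
    ∀ x y, p x ≠ 0 → p y ≠ 0 → f x = f y → x = y := by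
  have hterm : ∀ a : γ, 0 ≤ (p a).toReal *
      (Real.logb q ((p.map f) (f a)).toReal - Real.logb q (p a).toReal) := by
    intro a
    rcases eq_or_lt_of_le (ENNReal.toReal_nonneg (a := p a)) with h0 | h0
    · rw [← h0]; simp
    · refine mul_nonneg h0.le (sub_nonneg.mpr ?_)
      exact (Real.logb_le_logb hq h0 (lt_of_lt_of_le h0 (le_map_toReal p f a))).mpr
        (le_map_toReal p f a)
  have hsum : ∑ a, (p a).toReal *
      (Real.logb q ((p.map f) (f a)).toReal - Real.logb q (p a).toReal) = 0 := by
    have h' : (∑ a, (p a).toReal * Real.logb q ((p.map f) (f a)).toReal)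
        = ∑ a, (p a).toReal * Real.logb q (p a).toReal := by
      rw [← sum_tlogr]
      have := h
      unfold pmfH at this
      linarith
    simp_rw [mul_sub]
    rw [Finset.sum_sub_distrib, h', sub_self]
  have hall := (Finset.sum_eq_zero_iff_of_nonneg (fun a _ => hterm a)).mp hsum
  have key : ∀ a, p a ≠ 0 → (p a).toReal = ((p.map f) (f a)).toReal := by
    intro a ha
    have h0 : 0 < (p a).toReal := toReal_pos_of_ne_zero p ha
    have h1 := hall a (mem_univ a)
    have h2 : Real.logb q ((p.map f) (f a)).toReal = Real.logb q (p a).toReal := by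
      rcases mul_eq_zero.mp h1 with h3 | h3
      · exact absurd h3 (ne_of_gt h0)
      · linarith [sub_eq_zero.mp h3]
    refine le_antisymm (le_map_toReal p f a) ?_
    exact (Real.logb_le_logb hq (lt_of_lt_of_le h0 (le_map_toReal p f a)) h0).mp h2.le
  intro x y hx hy hfe
  by_contra hne
  have hxr := key x hx
  have hyr := key y hy
  have hx0 : 0 < (p x).toReal := toReal_pos_of_ne_zero p hx
  have hy0 : 0 < (p y).toReal := toReal_pos_of_ne_zero p hy
  have hle : (p x).toReal + (p y).toReal ≤ ((p.map f) (f x)).toReal := by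
    rw [map_toReal]
    have hpair : (p x).toReal + (p y).toReal
        = ∑ a ∈ ({x, y} : Finset γ), if f x = f a then (p a).toReal else 0 := by
      rw [Finset.sum_pair hne]
      rw [if_pos rfl, if_pos hfe]
    rw [hpair]
    refine Finset.sum_le_sum_of_subset_of_nonneg (Finset.subset_univ _) ?_
    intro i _ _; split_ifs <;> simp [ENNReal.toReal_nonneg]
  rw [hfe] at hle
  linarith [hxr, hyr]

lemma pmfH_pair_le [Fintype α] [Fintype β] {q : ℝ} (hq : 1 < q) (p : PMF (α × β)) :
    pmfH q p ≤ pmfH q (p.map Prod.fst) + pmfH q (p.map Prod.snd) := by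
  have hlogq : 0 < Real.log q := Real.log_pos hq
  set t : α × β → ℝ := fun x => (p x).toReal with ht
  set r1 : α → ℝ := fun a => ((p.map Prod.fst) a).toReal with hr1
  set r2 : β → ℝ := fun b => ((p.map Prod.snd) b).toReal with hr2
  have h1 : ∑ a, r1 a * Real.logb q (r1 a) = ∑ x : α × β, t x * Real.logb q (r1 x.1) :=
    sum_tlogr q p Prod.fst
  have h2 : ∑ b, r2 b * Real.logb q (r2 b) = ∑ x : α × β, t x * Real.logb q (r2 x.2) :=
    sum_tlogr q p Prod.snd
  have hbound : ∀ x : α × β,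
      t x * (Real.logb q (r1 x.1) + Real.logb q (r2 x.2) - Real.logb q (t x))
        ≤ (r1 x.1 * r2 x.2 - t x) / Real.log q := by
    intro x
    have htn : 0 ≤ t x := ENNReal.toReal_nonneg
    have hle1 : t x ≤ r1 x.1 := le_map_toReal p Prod.fst x
    have hle2 : t x ≤ r2 x.2 := le_map_toReal p Prod.snd x
    rcases eq_or_lt_of_le htn with h0 | h0
    · rw [← h0]
      simp only [zero_mul, sub_zero]
      positivity
    · have hr1p : 0 < r1 x.1 := lt_of_lt_of_le h0 hle1
      have hr2p : 0 < r2 x.2 := lt_of_lt_of_le h0 hle2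
      have hz : 0 < r1 x.1 * r2 x.2 / t x := by positivity
      have hlog : Real.log (r1 x.1 * r2 x.2 / t x) ≤ r1 x.1 * r2 x.2 / t x - 1 :=
        Real.log_le_sub_one_of_pos hz
      have heq : Real.logb q (r1 x.1) + Real.logb q (r2 x.2) - Real.logb q (t x)
          = Real.log (r1 x.1 * r2 x.2 / t x) / Real.log q := by
        rw [Real.log_div (by positivity) (ne_of_gt h0), Real.log_mul (ne_of_gt hr1p) (ne_of_gt hr2p)]
        unfold Real.logb
        ring
      rw [heq]
      calc t x * (Real.log (r1 x.1 * r2 x.2 / t x) / Real.log q)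
          ≤ t x * ((r1 x.1 * r2 x.2 / t x - 1) / Real.log q) := by gcongr
        _ = (r1 x.1 * r2 x.2 - t x) / Real.log q := by
            field_simp
  have hsum : ∑ x : α × β, (r1 x.1 * r2 x.2 - t x) / Real.log q = 0 := by
    rw [← Finset.sum_div]
    rw [Finset.sum_sub_distrib]
    have hA : ∑ x : α × β, r1 x.1 * r2 x.2 = 1 := by
      rw [Fintype.sum_prod_type]
      have : ∀ a, ∑ b, r1 a * r2 b = r1 a := by
        intro a; rw [← Finset.mul_sum, pmf_real_sum (p.map Prod.snd), mul_one]
      simp_rw [this]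
      exact pmf_real_sum (p.map Prod.fst)
    rw [hA, pmf_real_sum p, sub_self, zero_div]
  have hkey : ∑ x : α × β,
      t x * (Real.logb q (r1 x.1) + Real.logb q (r2 x.2) - Real.logb q (t x)) ≤ 0 := by
    rw [← hsum]
    exact Finset.sum_le_sum fun x _ => hbound x
  unfold pmfH
  simp_rw [mul_sub, mul_add] at hkey
  rw [Finset.sum_sub_distrib, Finset.sum_add_distrib] at hkey
  have goal' : -∑ x : α × β, t x * Real.logb q (t x)
      ≤ -∑ a, r1 a * Real.logb q (r1 a) + -∑ b, r2 b * Real.logb q (r2 b) := by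
    linarith [h1, h2, hkey]
  exact goal'

lemma pmfH_pair_uniform [Fintype α] [Fintype β] [Nonempty α] (q : ℝ) (p : PMF (α × β))
    (p2 : PMF β) (h : ∀ x : α × β, p x = (Fintype.card α : ℝ≥0∞)⁻¹ * p2 x.2) :
    pmfH q p = Real.logb q (Fintype.card α) + pmfH q p2 := by
  set c : ℝ := (Fintype.card α : ℝ) with hc
  have hc0 : 0 < c := by
    rw [hc]; exact_mod_cast Fintype.card_pos
  have htr : ∀ x : α × β, (p x).toReal = (p2 x.2).toReal / c := by
    intro x
    rw [h x, ENNReal.toReal_mul, ENNReal.toReal_inv, ENNReal.toReal_natCast]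
    rw [inv_mul_eq_div]
  have hterm : ∀ b : β, ((p2 b).toReal / c) * Real.logb q ((p2 b).toReal / c)
      = ((p2 b).toReal * Real.logb q ((p2 b).toReal) - (p2 b).toReal * Real.logb q c) / c := by
    intro b
    rcases eq_or_lt_of_le (ENNReal.toReal_nonneg (a := p2 b)) with h0 | h0
    · rw [← h0]; simp
    · rw [Real.logb_div (ne_of_gt h0) (ne_of_gt hc0)]
      field_simp
  unfold pmfH
  rw [Fintype.sum_prod_type]
  have inner : ∀ a : α, (∑ b, (p (a, b)).toReal * Real.logb q ((p (a,b)).toReal))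
      = (∑ b, (p2 b).toReal * Real.logb q ((p2 b).toReal) - Real.logb q c) / c := by
    intro a
    have : ∀ b, (p (a, b)).toReal * Real.logb q ((p (a,b)).toReal)
        = ((p2 b).toReal * Real.logb q ((p2 b).toReal) - (p2 b).toReal * Real.logb q c) / c := by
      intro b
      rw [htr (a, b)]
      exact hterm b
    simp_rw [this]
    rw [← Finset.sum_div, Finset.sum_sub_distrib, ← Finset.sum_mul, pmf_real_sum p2, one_mul]
  simp_rw [inner]
  rw [Finset.sum_const, Finset.card_univ, nsmul_eq_mul, ← hc]
  field_simp
  ring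

lemma PMF.map_congr_support {Ω : Type*} (μ : PMF Ω) (f g : Ω → α)
    (h : ∀ ω, μ ω ≠ 0 → f ω = g ω) : μ.map f = μ.map g := by
  ext b
  rw [PMF.map_apply, PMF.map_apply]
  refine tsum_congr fun ω => ?_
  by_cases hω : μ ω = 0
  · rw [hω]; split_ifs <;> rfl
  · rw [h ω hω]

lemma pmf_map_snd_apply [Fintype α] [Fintype β] (p : PMF (α × β)) (b : β) :
    (p.map Prod.snd) b = ∑ a, p (a, b) := by
  rw [PMF.map_apply, tsum_fintype, Fintype.sum_prod_type]
  refine Finset.sum_congr rfl fun a _ => ?_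
  simp [Finset.sum_ite_eq]

end EntropyToolbox

open Finset in
open scoped Classical in
set_option maxHeartbeats 1000000 in
/-- Converse bound on the first-round rate: in any scheme where the `W_i` are i.i.d.
uniform on `F^L` and independent of keys and queries, each first-round message `X_i`
(resp. second-round message `Y_i`) is a deterministic function of
`(W_i, P_i, Q_{1,i})` (resp. `(W_i, P_i, Q_{1,i}, Q_{2,i})`), the demand matrix `a` is
row-wise full rank with no zero column, and decodability holds even when the
second-round message of user `u` is lost (`H(sums | (X_i)_i, queries, (Y_i)_{i≠u}) = 0`),
the first-round message of user `u` satisfies `H(X_u) ≥ L = H(W_u)`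
(entropies base `q = |F|`). -/
theorem first_round_rate_converse {Ω F κ χ χ₂ ξ υ : Type*} [Field F] [Fintype F]
    [Fintype κ] [Fintype χ] [Fintype χ₂] [Fintype ξ] [Fintype υ]
    (K Kc L : ℕ) (μ : PMF Ω)
    (W : Fin K → Ω → (Fin L → F)) (P : Fin K → Ω → κ)
    (Q1 : Fin K → Ω → χ) (Q2 : Fin K → Ω → χ₂)
    (X : Fin K → Ω → ξ) (Y : Fin K → Ω → υ)
    (a : Fin Kc → Fin K → F)
    -- the inputs are jointly uniform, i.e. i.i.d. uniform on `F^L`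
    (hWunif : μ.map (fun ω => (fun i => W i ω)) = PMF.uniformOfFintype (Fin K → Fin L → F))
    -- the inputs are independent of keys and queries
    (hindep : ∀ w r,
      μ.map (fun ω => ((fun i => W i ω),
          ((fun i => P i ω), (fun i => Q1 i ω), (fun i => Q2 i ω)))) (w, r)
        = μ.map (fun ω => (fun i => W i ω)) w
          * μ.map (fun ω =>
              ((fun i => P i ω), (fun i => Q1 i ω), (fun i => Q2 i ω))) r)
    -- messages are deterministic functions of the sender's input, key and queries
    (hX : ∀ i, ∃ f : (Fin L → F) × κ × χ → ξ, ∀ ω, X i ω = f (W i ω, P i ω, Q1 i ω))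
    (hY : ∀ i, ∃ g : (Fin L → F) × κ × χ × χ₂ → υ,
      ∀ ω, Y i ω = g (W i ω, P i ω, Q1 i ω, Q2 i ω))
    -- the demand matrix is row-wise full rank and no column is identically zero
    (hrank : (Matrix.of a).rank = Kc)
    (hcol : ∀ i, ∃ n, a n i ≠ 0)
    (u : Fin K)
    -- decodability without the second-round message of user `u`:
    -- `H((Σ_i a_{n,i} W_i)_n | (X_i)_i, (Q_{1,i})_i, (Q_{2,i})_i, (Y_i)_{i ≠ u}) = 0`
    (hdec : ent (Fintype.card F) μ (fun ω =>
          ((fun n : Fin Kc => ∑ i, a n i • W i ω),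
           ((fun i => X i ω), (fun i => Q1 i ω), (fun i => Q2 i ω),
            (fun i : {i : Fin K // i ≠ u} => Y i.1 ω))))
        - ent (Fintype.card F) μ (fun ω =>
          ((fun i => X i ω), (fun i => Q1 i ω), (fun i => Q2 i ω),
           (fun i : {i : Fin K // i ≠ u} => Y i.1 ω))) = 0) :
    ent (Fintype.card F) μ (X u) ≥ L := by
  classical
  set q : ℝ := (Fintype.card F : ℝ) with hqdef
  have hq : 1 < q := by
    rw [hqdef]; exact_mod_cast Fintype.one_lt_card
  -- abbreviations
  set R : Ω → (Fin K → κ) × (Fin K → χ) × (Fin K → χ₂) :=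
    fun ω => ((fun i => P i ω), (fun i => Q1 i ω), (fun i => Q2 i ω)) with hRdef
  set T : Ω → ({i : Fin K // i ≠ u} → (Fin L → F)) ×
      ((Fin K → κ) × (Fin K → χ) × (Fin K → χ₂)) :=
    fun ω => ((fun i => W i.1 ω), R ω) with hTdef
  set S : Ω → (Fin Kc → Fin L → F) := fun ω => fun n => ∑ i, a n i • W i ω with hSdef
  set V : Ω → (Fin K → ξ) × (Fin K → χ) × (Fin K → χ₂) × ({i : Fin K // i ≠ u} → υ) :=
    fun ω => ((fun i => X i ω), (fun i => Q1 i ω), (fun i => Q2 i ω),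
      (fun i : {i : Fin K // i ≠ u} => Y i.1 ω)) with hVdef
  -- decodability: joint entropy of (S, V) equals entropy of V
  have hdec' : pmfH q (μ.map (fun ω => (S ω, V ω)))
      = pmfH q ((μ.map (fun ω => (S ω, V ω))).map Prod.snd) := by
    have h2 : (μ.map (fun ω => (S ω, V ω))).map Prod.snd = μ.map V := by
      rw [PMF.map_comp]
      rfl
    rw [h2]
    exact sub_eq_zero.mp hdec
  have hinj := injOn_of_pmfH_eq hq (μ.map (fun ω => (S ω, V ω))) Prod.snd hdec'
  -- decoding function on the support
  have hSdecodes : ∃ dec : (Fin K → ξ) × (Fin K → χ) × (Fin K → χ₂) ×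
      ({i : Fin K // i ≠ u} → υ) → (Fin Kc → Fin L → F),
      ∀ ω, μ ω ≠ 0 → S ω = dec (V ω) := by
    refine ⟨fun v => if hv : ∃ s, (μ.map (fun ω => (S ω, V ω))) (s, v) ≠ 0 then hv.choose
      else fun _ _ => 0, ?_⟩
    intro ω hω
    have hmem : (μ.map (fun ω => (S ω, V ω))) (S ω, V ω) ≠ 0 := by
      rw [← PMF.mem_support_iff, PMF.support_map]
      exact ⟨ω, (PMF.mem_support_iff μ ω).mpr hω, rfl⟩
    have hv : ∃ s, (μ.map (fun ω => (S ω, V ω))) (s, V ω) ≠ 0 := ⟨S ω, hmem⟩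
    show S ω = if hv : ∃ s, (μ.map (fun ω => (S ω, V ω))) (s, V ω) ≠ 0 then hv.choose
      else fun _ _ => 0
    rw [dif_pos hv]
    exact congrArg Prod.fst (hinj _ _ hmem hv.choose_spec rfl)
  obtain ⟨dec, hdecfun⟩ := hSdecodes
  -- deterministic encoding functions
  choose f hf using hX
  choose g hg using hY
  -- reconstruction of V from (X u, T)
  set gV : ξ × (({i : Fin K // i ≠ u} → (Fin L → F)) ×
      ((Fin K → κ) × (Fin K → χ) × (Fin K → χ₂))) →
      (Fin K → ξ) × (Fin K → χ) × (Fin K → χ₂) × ({i : Fin K // i ≠ u} → υ) :=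
    fun z => ((fun i => if h : i = u then z.1
        else f i (z.2.1 ⟨i, h⟩, z.2.2.1 i, z.2.2.2.1 i)),
      z.2.2.2.1, z.2.2.2.2,
      (fun i => g i.1 (z.2.1 i, z.2.2.1 i.1, z.2.2.2.1 i.1, z.2.2.2.2 i.1))) with hgVdef
  have hgV : ∀ ω, gV (X u ω, T ω) = V ω := by
    intro ω
    simp only [hgVdef, hTdef, hRdef, hVdef]
    refine Prod.ext ?_ (Prod.ext rfl (Prod.ext rfl ?_))
    · funext i
      by_cases h : i = u
      · dsimp only
        rw [dif_pos h, h]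
      · dsimp only
        rw [dif_neg h]
        exact (hf i ω).symm
    · funext i
      exact (hg i.1 ω).symm
  -- distribution facts
  set ν := μ.map (fun ω => ((fun i => W i ω), R ω)) with hνdef
  set pR := μ.map R with hpRdef
  set u0 : ℝ≥0∞ := ((Fintype.card (Fin K → Fin L → F) : ℕ) : ℝ≥0∞)⁻¹ with hu0def
  have hν : ∀ w r, ν (w, r) = u0 * pR r := by
    intro w r
    have h := hindep w r
    rw [hWunif, PMF.uniformOfFintype_apply] at h
    exact h
  have hAT : ∀ (w₀ : Fin L → F) w' r,
      (μ.map (fun ω => (W u ω, T ω))) (w₀, (w', r)) = u0 * pR r := by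
    intro w₀ w' r
    have hcomp : μ.map (fun ω => (W u ω, T ω))
        = ν.map (fun x => (x.1 u, ((fun i : {i : Fin K // i ≠ u} => x.1 i.1), x.2))) := by
      rw [hνdef, PMF.map_comp]
      rfl
    rw [hcomp, PMF.map_apply, tsum_fintype]
    have hsummand : ∀ (x : (Fin K → (Fin L → F)) ×
        ((Fin K → κ) × (Fin K → χ) × (Fin K → χ₂)))
        (inst : Decidable ((w₀, (w', r))
          = (x.1 u, ((fun i : {i : Fin K // i ≠ u} => x.1 i.1), x.2)))),
        (@ite ℝ≥0∞ _ inst (ν x) 0)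
        = (if x = ((Equiv.piSplitAt u (fun _ : Fin K => (Fin L → F))).symm (w₀, w'), r)
          then u0 * pR r else 0) := by
      intro x inst
      have hiff : ((w₀, (w', r)) = (x.1 u, ((fun i : {i : Fin K // i ≠ u} => x.1 i.1), x.2)))
          ↔ x = ((Equiv.piSplitAt u (fun _ : Fin K => (Fin L → F))).symm (w₀, w'), r) := by
        constructor
        · intro h
          obtain ⟨h1, h2, h3⟩ : w₀ = x.1 u ∧
              w' = (fun i : {i : Fin K // i ≠ u} => x.1 i.1) ∧ r = x.2 := by
            simpa [Prod.ext_iff] using h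
          have he : (Equiv.piSplitAt u (fun _ : Fin K => (Fin L → F))) x.1 = (w₀, w') := by
            rw [Equiv.piSplitAt_apply, ← h1, ← h2]
          have hx1 : x.1 = (Equiv.piSplitAt u (fun _ : Fin K => (Fin L → F))).symm (w₀, w') :=
            (Equiv.eq_symm_apply _).mpr he
          exact Prod.ext hx1 h3.symm
        · intro hx
          have hap := (Equiv.piSplitAt u (fun _ : Fin K => (Fin L → F))).apply_symm_apply (w₀, w')
          rw [Equiv.piSplitAt_apply] at hap
          have h1 : ((Equiv.piSplitAt u (fun _ : Fin K => (Fin L → F))).symm (w₀, w')) u = w₀ :=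
            congrArg Prod.fst hap
          have h2 : (fun j : {j : Fin K // j ≠ u} =>
              ((Equiv.piSplitAt u (fun _ : Fin K => (Fin L → F))).symm (w₀, w')) j.1) = w' :=
            congrArg Prod.snd hap
          rw [hx]
          exact Prod.ext h1.symm (Prod.ext h2.symm rfl)
      by_cases hx : x = ((Equiv.piSplitAt u (fun _ : Fin K => (Fin L → F))).symm (w₀, w'), r)
      · rw [if_pos (hiff.mpr hx), if_pos hx, hx, hν]
      · rw [if_neg (fun hc => hx (hiff.mp hc)), if_neg hx]
    refine Eq.trans (Finset.sum_congr rfl fun x _ => hsummand x _) ?_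
    rw [Finset.sum_ite_eq' Finset.univ]
    rw [if_pos (Finset.mem_univ _)]
  have hTmap : μ.map T = (μ.map (fun ω => (W u ω, T ω))).map Prod.snd := by
    rw [PMF.map_comp]
    rfl
  have hfact1 : ∀ z : (Fin L → F) × (({i : Fin K // i ≠ u} → (Fin L → F)) ×
      ((Fin K → κ) × (Fin K → χ) × (Fin K → χ₂))),
      (μ.map (fun ω => (W u ω, T ω))) z
        = ((Fintype.card (Fin L → F) : ℕ) : ℝ≥0∞)⁻¹ * (μ.map T) z.2 := by
    rintro ⟨w₀, w', r⟩
    have hTval : (μ.map T) (w', r)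
        = ((Fintype.card (Fin L → F) : ℕ) : ℝ≥0∞) * (u0 * pR r) := by
      rw [hTmap, pmf_map_snd_apply]
      have : ∀ w₁ : Fin L → F,
          (μ.map (fun ω => (W u ω, T ω))) (w₁, (w', r)) = u0 * pR r := fun w₁ => hAT w₁ w' r
      rw [Finset.sum_congr rfl fun w₁ _ => this w₁, Finset.sum_const, Finset.card_univ,
        nsmul_eq_mul]
    rw [hAT w₀ w' r, hTval, ← mul_assoc,
      ENNReal.inv_mul_cancel (by exact_mod_cast Fintype.card_ne_zero) (ENNReal.natCast_ne_top _),
      one_mul]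
  -- entropy computations
  have hent_pair : ent (Fintype.card F) μ (fun ω => (W u ω, T ω))
      = Real.logb q (Fintype.card (Fin L → F)) + ent (Fintype.card F) μ T := by
    rw [ent_eq_pmfH, ent_eq_pmfH]
    exact pmfH_pair_uniform q (μ.map (fun ω => (W u ω, T ω))) (μ.map T) hfact1
  have hlog : Real.logb q (Fintype.card (Fin L → F)) = L := by
    have hcard : Fintype.card (Fin L → F) = Fintype.card F ^ L := by
      rw [Fintype.card_fun, Fintype.card_fin]
    rw [hcard, Nat.cast_pow, Real.logb_pow, ← hqdef, Real.logb_self_eq_one hq, mul_one]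
  obtain ⟨n, hn⟩ := hcol u
  have step2 : ent (Fintype.card F) μ (fun ω => (W u ω, T ω))
      ≤ ent (Fintype.card F) μ (fun ω => (S ω, T ω)) := by
    set fdec : (Fin Kc → Fin L → F) × (({i : Fin K // i ≠ u} → (Fin L → F)) ×
        ((Fin K → κ) × (Fin K → χ) × (Fin K → χ₂))) →
        (Fin L → F) × (({i : Fin K // i ≠ u} → (Fin L → F)) ×
        ((Fin K → κ) × (Fin K → χ) × (Fin K → χ₂))) :=
      fun z => ((a n u)⁻¹ • (z.1 n - ∑ i : {i : Fin K // i ≠ u}, a n i.1 • z.2.1 i), z.2)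
      with hfdec
    have hfun : (fun ω => (W u ω, T ω)) = fun ω => fdec (S ω, T ω) := by
      funext ω
      rw [hfdec]
      simp only [hTdef, hSdef]
      refine Prod.ext ?_ rfl
      dsimp only
      have h1 : ∑ i : {i : Fin K // i ≠ u}, a n i.1 • W i.1 ω
          = ∑ i ∈ Finset.univ.erase u, a n i • W i ω :=
        (Finset.sum_subtype (Finset.univ.erase u) (fun x => by simp)
          (fun i => a n i • W i ω)).symm
      have h2 : (∑ i, a n i • W i ω)
          = a n u • W u ω + ∑ i ∈ Finset.univ.erase u, a n i • W i ω :=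
        (Finset.add_sum_erase Finset.univ (fun i => a n i • W i ω) (Finset.mem_univ u)).symm
      rw [h1, h2, add_sub_cancel_right, inv_smul_smul₀ hn]
    have hcle := ent_comp_le (β := (Fin L → F) × (({i : Fin K // i ≠ u} → (Fin L → F)) ×
        ((Fin K → κ) × (Fin K → χ) × (Fin K → χ₂)))) hq μ (fun ω => (S ω, T ω)) fdec
    have hEq : ent (Fintype.card F) μ (fun ω => (W u ω, T ω))
        = ent (Fintype.card F) μ (fun ω => fdec (S ω, T ω)) := by rw [hfun]
    exact hEq.trans_le hcle
  have step3 : ent (Fintype.card F) μ (fun ω => (S ω, T ω))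
      = ent (Fintype.card F) μ (fun ω => (dec (gV (X u ω, T ω)), T ω)) := by
    rw [ent_eq_pmfH, ent_eq_pmfH]
    have hm : μ.map (fun ω => (S ω, T ω))
        = μ.map (fun ω => (dec (gV (X u ω, T ω)), T ω)) := by
      refine PMF.map_congr_support μ _ _ (fun ω hω => ?_)
      rw [hgV ω, ← hdecfun ω hω]
    rw [hm]
  have step4 : ent (Fintype.card F) μ (fun ω => (dec (gV (X u ω, T ω)), T ω))
      ≤ ent (Fintype.card F) μ (fun ω => (X u ω, T ω)) :=
    ent_comp_le hq μ (fun ω => (X u ω, T ω)) (fun z => (dec (gV z), z.2))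
  have step5 : ent (Fintype.card F) μ (fun ω => (X u ω, T ω))
      ≤ ent (Fintype.card F) μ (X u) + ent (Fintype.card F) μ T := by
    have h := pmfH_pair_le hq (μ.map (fun ω => (X u ω, T ω)))
    rw [PMF.map_comp, PMF.map_comp] at h
    exact h
  have hLsum : (L : ℝ) + ent (Fintype.card F) μ T
      = ent (Fintype.card F) μ (fun ω => (W u ω, T ω)) := by
    rw [hent_pair, hlog]
  linarith [step2, step3, step4, step5, hLsum]
end

section
/- Conditional security with aggregate key leakage: let W₁,…,W_K be independent random vectors on F_q^L, Z₁,…,Z_K i.i.d. uniform on F_q^L independent of the W's, and a₁,…,a_K nonzero field elements. Then I((W_i)_i ; (W_i + Z_i)_i, Σ_i a_i Z_i | Σ_i a_i W_i) = 0 fails in general, but for the scheme X_i = W_i + α_i Z_i with α_i = 1/(t a_i), the server's observation ((X_i)_i, Σ_i Z_i) reveals only Σ_i a_i W_i: formally I((W_i)_i ; (X_i)_i, Σ_i Z_i | Σ_i a_i W_i) = 0 when K ≥ 2. -/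
/-!
Write `A = (W_i)_i`, `X_i = W_i + α_i Z_i` and `C = ∑ i, a_i W_i`; the server's view is
`(X, ∑ Z)`. Since `t a_i α_i = 1`, the key sum is determined by `X` and the aggregate:
`∑ i, Z_i = t (∑ i, a_i X_i - C)`. Hence
`H(A, C) = H(A)`, `H(A, X, ∑ Z, C) = H(A, Z) = H(A) + log |F^{KL}|`, and
`H(X, ∑ Z, C) = H(X, C) = log |F^{KL}| + H(C)`, the last because `X` is a one-time pad of `A`
with the uniform key `(α_i Z_i)_i` and is therefore uniform and independent of `C`. The four
terms cancel.
-/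

open scoped ENNReal

open Real Function

namespace PMF

variable {α β γ δ : Type*}

lemma map_apply_of_injective (P : PMF α) {e : α → β} (he : Injective e) (x : α) :
    P.map e (e x) = P x := by
  rw [map_apply, tsum_eq_single x fun y hy => if_neg fun h => hy (he h).symm, if_pos rfl]

lemma map_apply_eq_zero_of_notMem_range (P : PMF α) {e : α → β} {y : β}
    (hy : y ∉ Set.range e) : P.map e y = 0 := by
  rw [map_apply, ENNReal.tsum_eq_zero]
  exact fun x => if_neg fun h => hy ⟨x, h.symm⟩

variable [Fintype α] [Fintype β] [Fintype γ]

lemma sum_toReal (P : PMF α) : ∑ x, (P x).toReal = 1 := by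
  rw [← ENNReal.toReal_sum fun x _ => P.apply_ne_top x, ← tsum_fintype (L := .unconditional _),
    P.tsum_coe, ENNReal.toReal_one]

noncomputable def entropy (q : ℝ) (P : PMF α) : ℝ :=
  - ∑ x, (P x).toReal * logb q (P x).toReal

lemma entropy_eq_sum_negMulLog (q : ℝ) (P : PMF α) :
    P.entropy q = (∑ x, negMulLog (P x).toReal) / log q := by
  simp only [entropy, negMulLog, logb, Finset.sum_div, ← Finset.sum_neg_distrib]
  congr 1 with x
  ring

lemma entropy_map_of_injective (q : ℝ) (P : PMF α) {e : α → β} (he : Injective e) :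
    (P.map e).entropy q = P.entropy q := by
  simp only [entropy_eq_sum_negMulLog]
  congr 1
  refine (Fintype.sum_of_injective e he _ _ (fun y hy => ?_) fun x => ?_).symm
  · simp [P.map_apply_eq_zero_of_notMem_range hy]
  · rw [P.map_apply_of_injective he]

lemma entropy_of_apply_prod (q : ℝ) (P : PMF (α × β)) (Q : PMF α) (R : PMF β)
    (h : ∀ x y, P (x, y) = Q x * R y) :
    P.entropy q = Q.entropy q + R.entropy q := by
  simp only [entropy_eq_sum_negMulLog, ← add_div, Fintype.sum_prod_type, h,
    ENNReal.toReal_mul, negMulLog_mul, Finset.sum_add_distrib, ← Finset.sum_mul,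
    ← Finset.mul_sum, sum_toReal, one_mul]

lemma entropy_uniformOfFintype (q : ℝ) [Nonempty α] :
    (uniformOfFintype α).entropy q = logb q (Fintype.card α) := by
  have hn : (Fintype.card α : ℝ) ≠ 0 := by positivity
  simp only [entropy_eq_sum_negMulLog, uniformOfFintype_apply, ENNReal.toReal_inv,
    ENNReal.toReal_natCast, Finset.sum_const, Finset.card_univ, nsmul_eq_mul, negMulLog,
    log_inv, logb]
  field_simp

lemma map_mask_apply [Nonempty γ] (ν : PMF (β × γ)) (P : PMF β)
    (hν : ∀ w z, ν (w, z) = P w * uniformOfFintype γ z) {e : β → γ → γ}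
    (he : ∀ w, Bijective (e w)) (f : β → δ) (x : γ) (c : δ) :
    ν.map (fun s => (e s.1 s.2, f s.1)) (x, c) = uniformOfFintype γ x * P.map f c := by
  classical
  rw [map_apply, tsum_fintype, Fintype.sum_prod_type, map_apply, tsum_fintype, Finset.mul_sum]
  refine Finset.sum_congr rfl fun w _ => ?_
  simp only [hν, Prod.mk.injEq, uniformOfFintype_apply]
  rw [(he w).sum_comp fun y => if x = y ∧ c = f w then P w * (Fintype.card γ : ℝ≥0∞)⁻¹ else 0]
  simp [ite_and, mul_comm]

end PMF

section Entropy

variable {Ω α γ δ : Type*} [Fintype α] [Fintype γ] [Fintype δ] (q : ℝ) (μ : PMF Ω)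

lemma ent_eq_entropy_map (X : Ω → α) : ent q μ X = (μ.map X).entropy q := rfl

lemma ent_comp_of_injective {β : Type*} [Fintype β] (X : Ω → α) {e : α → β}
    (he : Injective e) : ent q μ (fun ω => e (X ω)) = ent q μ X := by
  rw [ent_eq_entropy_map, ent_eq_entropy_map, ← PMF.entropy_map_of_injective q _ he,
    PMF.map_comp]
  rfl

lemma ent_prod_of_uniform [Nonempty γ] (X : Ω → α) (Y : Ω → γ)
    (h : ∀ x y, μ.map (fun ω => (X ω, Y ω)) (x, y) = μ.map X x * PMF.uniformOfFintype γ y) :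
    ent q μ (fun ω => (X ω, Y ω)) = ent q μ X + logb q (Fintype.card γ) := by
  rw [ent_eq_entropy_map, PMF.entropy_of_apply_prod q _ _ _ h, PMF.entropy_uniformOfFintype]
  rfl

lemma ent_mask_of_uniform [Nonempty γ] (X : Ω → α) (Y : Ω → γ)
    (h : ∀ x y, μ.map (fun ω => (X ω, Y ω)) (x, y) = μ.map X x * PMF.uniformOfFintype γ y)
    {e : α → γ → γ} (he : ∀ x, Bijective (e x)) (f : α → δ) :
    ent q μ (fun ω => (e (X ω) (Y ω), f (X ω)))
      = logb q (Fintype.card γ) + ent q μ (fun ω => f (X ω)) := by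
  have := PMF.entropy_of_apply_prod q _ _ _ (PMF.map_mask_apply _ _ h he f)
  rwa [PMF.entropy_uniformOfFintype, PMF.map_comp, PMF.map_comp] at this

end Entropy

section AggregateKey

variable {Ω ι F V : Type*} [Fintype ι] [DecidableEq ι] [Field F] [AddCommGroup V] [Module F V]
  [Fintype V] (q : ℝ) (μ : PMF Ω) (W Z : ι → Ω → V) {a α : ι → F}

omit [Fintype ι] [DecidableEq ι] [Fintype V] in
lemma mask_injective (hα : ∀ i, α i ≠ 0) (w : ι → V) :
    Injective fun (z : ι → V) i => w i + α i • z i := fun _ _ h =>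
  funext fun i => smul_right_injective V (hα i) (add_left_cancel (congrFun h i))

omit [DecidableEq ι] [Fintype V] in
lemma sum_eq_smul_sub {t : F} (h : ∀ i, t * a i * α i = 1) (w z : ι → V) :
    ∑ i, z i = t • (∑ i, a i • (w i + α i • z i) - ∑ i, a i • w i) := by
  simp only [smul_add, Finset.sum_add_distrib, add_sub_cancel_left, Finset.smul_sum, smul_smul,
    ← mul_assoc, h, one_smul]

lemma ent_shares_aggregate (a : ι → F) :
    ent q μ (fun ω => ((fun i => W i ω), ∑ i, a i • W i ω)) = ent q μ (fun ω i => W i ω) :=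
  ent_comp_of_injective q μ (fun ω i => W i ω) (e := fun w => (w, ∑ i, a i • w i))
    fun _ _ h => congrArg Prod.fst h

lemma ent_shares_view_aggregate (hα : ∀ i, α i ≠ 0) (a : ι → F)
    (hZ : ∀ w z : ι → V, μ.map (fun ω => ((fun i => W i ω), (fun i => Z i ω))) (w, z)
      = μ.map (fun ω i => W i ω) w * PMF.uniformOfFintype (ι → V) z) :
    ent q μ (fun ω => ((fun i => W i ω), ((fun i => W i ω + α i • Z i ω), ∑ i, Z i ω),
        ∑ i, a i • W i ω))
      = ent q μ (fun ω i => W i ω) + logb q (Fintype.card (ι → V)) := by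
  have hinj : Injective fun s : (ι → V) × (ι → V) =>
      (s.1, ((fun i => s.1 i + α i • s.2 i), ∑ i, s.2 i), ∑ i, a i • s.1 i) := by
    rintro ⟨w, z⟩ ⟨w', z'⟩ h
    simp only [Prod.mk.injEq] at h
    obtain ⟨rfl, ⟨hx, -⟩, -⟩ := h
    rw [mask_injective hα w hx]
  exact (ent_comp_of_injective q μ (fun ω => ((fun i => W i ω), fun i => Z i ω)) hinj).trans
    (ent_prod_of_uniform q μ _ _ hZ)

lemma ent_view_aggregate {t : F} (h : ∀ i, t * a i * α i = 1)
    (hZ : ∀ w z : ι → V, μ.map (fun ω => ((fun i => W i ω), (fun i => Z i ω))) (w, z)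
      = μ.map (fun ω i => W i ω) w * PMF.uniformOfFintype (ι → V) z) :
    ent q μ (fun ω => (((fun i => W i ω + α i • Z i ω), ∑ i, Z i ω), ∑ i, a i • W i ω))
      = logb q (Fintype.card (ι → V)) + ent q μ (fun ω => ∑ i, a i • W i ω) := by
  have hα i : α i ≠ 0 := right_ne_zero_of_mul_eq_one (h i)
  -- `∑ i, Z i = t • (∑ i, a i • X i - ∑ i, a i • W i)`, so the key sum adds no information
  have hinj : Injective fun p : (ι → V) × V => ((p.1, t • (∑ i, a i • p.1 i - p.2)), p.2) :=
    fun p p' hp => Prod.ext (congrArg (·.1.1) hp) (congrArg (·.2) hp)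
  rw [← ent_mask_of_uniform q μ _ _ hZ (fun w => (mask_injective hα w).bijective_of_finite)
      (fun w => ∑ i, a i • w i),
    ← ent_comp_of_injective q μ _ hinj]
  simp only [← sum_eq_smul_sub h]

end AggregateKey

/-- `I(A ; B | C)` (base `|F|`) is expanded as `H(A,C) + H(B,C) − H(A,B,C) − H(C)` with
`A = (W_i)_i`, `B = ((X_i)_i, Σ_i Z_i)`, `C = Σ_i a_i W_i`. -/
theorem conditional_security_with_aggregate_key_general {Ω F : Type*} [Field F] [Fintype F]
    (K L : ℕ)
    (μ : PMF Ω) (W Z : Fin K → Ω → (Fin L → F))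
    (t : F) (ht : t ≠ 0) (a : Fin K → F) (ha : ∀ i, a i ≠ 0)
    (α : Fin K → F) (hαdef : ∀ i, α i = (t * a i)⁻¹)
    -- `(Z_i)_i` is i.i.d. uniform on `F^L` (jointly uniform) and independent of `(W_i)_i`
    (hZ : ∀ (w z : Fin K → Fin L → F),
      μ.map (fun ω => ((fun i => W i ω), (fun i => Z i ω))) (w, z)
        = μ.map (fun ω => (fun i => W i ω)) w
          * PMF.uniformOfFintype (Fin K → Fin L → F) z) :
    ent (Fintype.card F) μ (fun ω =>
        ((fun i => W i ω), ∑ i, a i • W i ω))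
      + ent (Fintype.card F) μ (fun ω =>
        (((fun i => W i ω + α i • Z i ω), ∑ i, Z i ω), ∑ i, a i • W i ω))
      - ent (Fintype.card F) μ (fun ω =>
        ((fun i => W i ω), ((fun i => W i ω + α i • Z i ω), ∑ i, Z i ω),
          ∑ i, a i • W i ω))
      - ent (Fintype.card F) μ (fun ω => ∑ i, a i • W i ω) = 0 := by
  have hta : ∀ i, t * a i * α i = 1 := fun i => by
    rw [hαdef, mul_inv_cancel₀ (mul_ne_zero ht (ha i))]
  rw [ent_shares_aggregate, ent_view_aggregate _ _ _ _ hta hZ,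
    ent_shares_view_aggregate _ _ _ _ (fun i => right_ne_zero_of_mul_eq_one (hta i)) _ hZ]
  ring

/-- Conditional security with aggregate key leakage: for the scheme
`X_i = W_i + α_i Z_i` with `α_i = 1/(t·a_i)`, the server's observation
`((X_i)_i, Σ_i Z_i)` reveals only `Σ_i a_i W_i`:
`I((W_i)_i ; (X_i)_i, Σ_i Z_i | Σ_i a_i W_i) = 0`, where the conditional mutual
information (base `q = |F|`) is expanded as
`H(A,C) + H(B,C) − H(A,B,C) − H(C)` with `A = (W_i)_i`, `B = ((X_i)_i, Σ_i Z_i)`,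
`C = Σ_i a_i W_i`. -/
theorem conditional_security_with_aggregate_key {Ω F : Type*} [Field F] [Fintype F]
    (K L : ℕ) (hK : 2 ≤ K) (hq : 2 < Fintype.card F)
    (μ : PMF Ω) (W Z : Fin K → Ω → (Fin L → F))
    (t : F) (ht : t ≠ 0) (a : Fin K → F) (ha : ∀ i, a i ≠ 0)
    (α : Fin K → F) (hαdef : ∀ i, α i = (t * a i)⁻¹)
    -- `W₁,…,W_K` are mutually independent
    (hWindep : ∀ w : Fin K → Fin L → F,
      μ.map (fun ω => (fun i => W i ω)) w = ∏ i, μ.map (W i) (w i))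
    -- `(Z_i)_i` is i.i.d. uniform on `F^L` (jointly uniform) and independent of `(W_i)_i`
    (hZ : ∀ (w z : Fin K → Fin L → F),
      μ.map (fun ω => ((fun i => W i ω), (fun i => Z i ω))) (w, z)
        = μ.map (fun ω => (fun i => W i ω)) w
          * PMF.uniformOfFintype (Fin K → Fin L → F) z) :
    ent (Fintype.card F) μ (fun ω =>
        ((fun i => W i ω), ∑ i, a i • W i ω))
      + ent (Fintype.card F) μ (fun ω =>
        (((fun i => W i ω + α i • Z i ω), ∑ i, Z i ω), ∑ i, a i • W i ω))
      - ent (Fintype.card F) μ (fun ω =>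
        ((fun i => W i ω), ((fun i => W i ω + α i • Z i ω), ∑ i, Z i ω),
          ∑ i, a i • W i ω))
      - ent (Fintype.card F) μ (fun ω => ∑ i, a i • W i ω) = 0 :=
  conditional_security_with_aggregate_key_general K L μ W Z t ht a ha α hαdef hZ
end
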